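/- Let f : ℕ → ℝ → ℝ and S ⊆ ℝ. Then (f n) is uniformly Cauchy on S (UniformCauchySeqOn f Filter.atTop S) if and only if for all infinite hypernaturals N and N' and every hyperreal X belonging to the natural extension of S (i.e., Filter.Germ.LiftPred (· ∈ S) X), the hyperreal Filter.Germ.map₂ f N X − Filter.Germ.map₂ f N' X is infinitesimal. (This is the nonstandard reading of Cauchy's 1853 hypothesis that s_{n'} − s_n 'always' becomes infinitely small.) -/

import Mathlib

/-!
Both sides say that `f n x - f n' x` becomes small once `n` and `n'` are large, uniformly in
`x ∈ S`. Read through the ultrapower, the right-hand side says this along the hyperfilter for all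
sequences `n i, n' i → ∞` and `x i ∈ S`. That this follows from uniform Cauchyness is immediate;
conversely, if uniform Cauchyness fails for some `ε`, then there are `m i, n i ≥ i` and `x i ∈ S`
with `|f (m i) (x i) - f (n i) (x i)| ≥ ε` for every `i`, and these give infinite `N, N'` and a
point `X` of `S*` at which the difference is not infinitesimal.
-/

open Hyperreal Filter

/-- The hypernaturals: the ultrapower of `ℕ` by the hyperfilter on `ℕ`. -/
abbrev Hypernat : Type := Filter.Germ (Filter.hyperfilter ℕ : Filter ℕ) ℕ

notation "ℕ*" => Hypernat

open scoped Topology Uniformity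

section UniformCauchySeqOn

variable {ι α β : Type*} [UniformSpace β] {F : ι → α → β} {p : Filter ι} {s : Set α}

theorem UniformCauchySeqOn.tendsto_uniformity_comp {γ : Type*} (hF : UniformCauchySeqOn F p s)
    {l : Filter γ} {n n' : γ → ι} {x : γ → α} (hn : Tendsto n l p) (hn' : Tendsto n' l p)
    (hx : ∀ᶠ i in l, x i ∈ s) : Tendsto (fun i ↦ (F (n i) (x i), F (n' i) (x i))) l (𝓤 β) :=
  fun u hu ↦ ((hn.prodMk hn').eventually (hF u hu)).and hx |>.mono fun i hi ↦ hi.1 (x i) hi.2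

theorem uniformCauchySeqOn_of_forall_tendsto_uniformity [p.IsCountablyGenerated]
    {l : Filter ℕ} [l.NeBot] (hl : l ≤ atTop)
    (h : ∀ (n n' : ℕ → ι) (x : ℕ → α), Tendsto n l p → Tendsto n' l p → (∀ᶠ i in l, x i ∈ s) →
      Tendsto (fun i ↦ (F (n i) (x i), F (n' i) (x i))) l (𝓤 β)) :
    UniformCauchySeqOn F p s := by
  intro u hu
  by_contra hfails
  obtain ⟨φ, hφ, hbad⟩ := exists_seq_forall_of_frequently (not_eventually.mp hfails)
  push Not at hbad
  choose x hxs hxu using hbad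
  have hφl : Tendsto φ l (p ×ˢ p) := hφ.mono_left hl
  have hgood : ∀ᶠ k in l, (F (φ k).1 (x k), F (φ k).2 (x k)) ∈ u :=
    h (fun k ↦ (φ k).1) (fun k ↦ (φ k).2) x (tendsto_fst.comp hφl) (tendsto_snd.comp hφl)
      (.of_forall hxs) hu
  obtain ⟨k, hk⟩ := hgood.exists
  exact hxu k hk

theorem uniformCauchySeqOn_iff_forall_tendsto_uniformity [p.IsCountablyGenerated]
    {l : Filter ℕ} [l.NeBot] (hl : l ≤ atTop) :
    UniformCauchySeqOn F p s ↔
      ∀ (n n' : ℕ → ι) (x : ℕ → α), Tendsto n l p → Tendsto n' l p → (∀ᶠ i in l, x i ∈ s) →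
        Tendsto (fun i ↦ (F (n i) (x i), F (n' i) (x i))) l (𝓤 β) :=
  ⟨fun hF _ _ _ ↦ hF.tendsto_uniformity_comp, uniformCauchySeqOn_of_forall_tendsto_uniformity hl⟩

end UniformCauchySeqOn

theorem tendsto_uniformity_iff_tendsto_sub_nhds_zero {γ G : Type*} [UniformSpace G] [AddGroup G]
    [IsUniformAddGroup G] {l : Filter γ} {a b : γ → G} :
    Tendsto (fun i ↦ (a i, b i)) l (𝓤 G) ↔ Tendsto (fun i ↦ a i - b i) l (𝓝 0) := by
  rw [uniformity_eq_comap_nhds_zero_swapped, tendsto_comap_iff, Function.comp_def]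

theorem Hypernat.forall_natCast_lt_coe_iff (n : ℕ → ℕ) :
    (∀ m : ℕ, (m : ℕ*) < ↑n) ↔ Tendsto n (hyperfilter ℕ) atTop := by
  simp only [atTop_basis_Ioi.tendsto_right_iff, forall_const, Set.mem_Ioi]
  exact forall_congr' fun m ↦ Germ.coe_lt

theorem Hyperreal.infinitesimal_ofSeq_iff (u : ℕ → ℝ) :
    Infinitesimal (ofSeq u) ↔ Tendsto u (hyperfilter ℕ) (𝓝 0) :=
  isSt_ofSeq_iff_tendsto

theorem uniformCauchySeqOn_iff_infinitesimal (f : ℕ → ℝ → ℝ) (S : Set ℝ) :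
    UniformCauchySeqOn f Filter.atTop S ↔
      ∀ N N' : ℕ*, (∀ m : ℕ, (m : ℕ*) < N) → (∀ m : ℕ, (m : ℕ*) < N') →
        ∀ X : ℝ*, Filter.Germ.LiftPred (· ∈ S) X →
          Hyperreal.Infinitesimal (Filter.Germ.map₂ f N X - Filter.Germ.map₂ f N' X) := by
  have hdiff (n n' : ℕ → ℕ) (x : ℕ → ℝ) :
      Germ.map₂ f (n : ℕ*) (ofSeq x) - Germ.map₂ f (n' : ℕ*) (ofSeq x) =
        ofSeq fun i ↦ f (n i) (x i) - f (n' i) (x i) := rfl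
  simp only [uniformCauchySeqOn_iff_forall_tendsto_uniformity Nat.hyperfilter_le_atTop,
    tendsto_uniformity_iff_tendsto_sub_nhds_zero]
  constructor
  · intro h N N' hN hN' X hX
    induction N using Germ.inductionOn with | h n =>
    induction N' using Germ.inductionOn with | h n' =>
    obtain ⟨x, rfl⟩ := ofSeq_surjective X
    rw [hdiff n n' x, infinitesimal_ofSeq_iff]
    exact h n n' x ((Hypernat.forall_natCast_lt_coe_iff n).mp hN)
      ((Hypernat.forall_natCast_lt_coe_iff n').mp hN') (Germ.liftPred_coe.mp hX)
  · intro h n n' x hn hn' hx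
    rw [← infinitesimal_ofSeq_iff, ← hdiff n n' x]
    exact h n n' ((Hypernat.forall_natCast_lt_coe_iff n).mpr hn)
      ((Hypernat.forall_natCast_lt_coe_iff n').mpr hn') (ofSeq x) (Germ.liftPred_coe.mpr hx)
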